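/- Let X be a locally path connected and semilocally simply connected topological space. Then X is second countable if and only if Π₁(X) with the CO' topology is second countable (and these are also equivalent to P(X) with the compact-open topology being second countable). -/

import Mathlib

open unitInterval

noncomputable section

variable {X : Type*} [TopologicalSpace X]

/-- The path-homotopy (homotopy relative to `{0,1}`) relation on `C(I, X)`. -/
def pRel (f g : C(I, X)) : Prop := f.HomotopicRel g {0, 1}

/-- The path-homotopy setoid on `C(I, X)`. -/
def pSetoid (X : Type*) [TopologicalSpace X] : Setoid C(I, X) :=
  ⟨pRel, ContinuousMap.HomotopicRel.equivalence⟩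

/-- The fundamental groupoid `Π₁(X)` as the quotient of the path space `P(X) = C(I, X)`
(with the compact-open topology) by path homotopy; it carries the quotient (CO') topology. -/
abbrev Pi1 (X : Type*) [TopologicalSpace X] := Quotient (pSetoid X)

/-- The quotient map `q : P(X) → Π₁(X)`. -/
def pq : C(I, X) → Pi1 X := Quotient.mk (pSetoid X)

theorem pRel.endpts {f g : C(I, X)} (h : pRel f g) {t : I} (ht : t ∈ ({0, 1} : Set I)) :
    f t = g t := h.some.fst_eq_snd ht

/-- The source map `s : Π₁(X) → X`, `[γ] ↦ γ(0)`. -/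
def srcMap : Pi1 X → X :=
  Quotient.lift (fun f : C(I, X) => f 0) fun _ _ h =>
    pRel.endpts h (by simp)

/-- The range map `r : Π₁(X) → X`, `[γ] ↦ γ(1)`. -/
def rngMap : Pi1 X → X :=
  Quotient.lift (fun f : C(I, X) => f 1) fun _ _ h =>
    pRel.endpts h (by simp)

/-- A continuous map `I → X` regarded as a `Path` between its endpoints. -/
def toPath (f : C(I, X)) : Path (f 0) (f 1) := ⟨f, rfl, rfl⟩

/-- Concatenation `α ⧠ β` of paths: traverse `β` first and then `α`
(given `β 1 = α 0`). -/
def concat (α β : C(I, X)) (h : β 1 = α 0) : C(I, X) :=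
  ((toPath β).trans ((toPath α).cast h rfl)).toContinuousMap

@[simp] theorem concat_zero (α β : C(I, X)) (h : β 1 = α 0) : concat α β h 0 = β 0 :=
  ((toPath β).trans ((toPath α).cast h rfl)).source

@[simp] theorem concat_one (α β : C(I, X)) (h : β 1 = α 0) : concat α β h 1 = α 1 :=
  ((toPath β).trans ((toPath α).cast h rfl)).target

/-- The set `N([γ], U, V) = {[δ ⧠ γ ⧠ θ] : δ a path in U with δ 0 = γ 1,
θ a path in V with θ 1 = γ 0}` in `Π₁(X)`. -/
def Nhd (a : Pi1 X) (U V : Set X) : Set (Pi1 X) :=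
  { b | ∃ (γ δ θ : C(I, X)) (h₁ : θ 1 = γ 0) (h₂ : γ 1 = δ 0),
      pq γ = a ∧ Set.range δ ⊆ U ∧ Set.range θ ⊆ V ∧
      b = pq (concat δ (concat γ θ h₁) ((concat_one γ θ h₁).trans h₂)) }

/-- A subset `U ⊆ X` is relatively inessential in `X` if every loop in `U` is
null-homotopic (path-homotopic to a constant path) in `X`. -/
def RelInessential (X : Type*) [TopologicalSpace X] (U : Set X) : Prop :=
  ∀ γ : C(I, X), Set.range γ ⊆ U → γ 1 = γ 0 →
    pRel γ (ContinuousMap.const I (γ 0))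

/-- `X` is semilocally simply connected if every point has a relatively inessential
open neighbourhood. -/
def SemilocSimplyConnected (X : Type*) [TopologicalSpace X] : Prop :=
  ∀ x : X, ∃ U : Set X, IsOpen U ∧ x ∈ U ∧ RelInessential X U

/-!
Constant paths embed `X` in `C(I, X)` and in `Π₁(X)` (with retractions `f ↦ f 0` and `srcMap`),
and `C(I, X)` is second countable along with `X` because `I` is compact metrizable. What remains
is that `pq : C(I, X) → Π₁(X)` is an open map, so that it carries a countable basis to one.

For an open `W ∋ γ` and `δ ≃ γ` this comes from two facts about the sets `Nhd`.
* Paths `g` close to `δ` satisfy `[g] ∈ Nhd [δ] A B`: cut `δ` into pieces lying in relatively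
  inessential open sets and join `δ` to `g` by short rungs at the cut points; every rectangle is
  then a loop in an inessential set.
* `Nhd [γ] A B ⊆ pq '' W` for small `A`, `B`: running the short end paths in time `ε` and `γ` in
  between gives a path pointwise close to `γ ∘ stretch ε`, which tends to `γ` as `ε → 0`.
-/

open Set Filter Topology

theorem toPath_apply (f : C(I, X)) (t : I) : toPath f t = f t := rfl

theorem concat_apply (α β : C(I, X)) (h : β 1 = α 0) (t : I) :
    concat α β h t = ((toPath β).trans ((toPath α).cast h rfl)) t := rfl

theorem pRel.homotopic {f g : C(I, X)} (h : pRel f g) :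
    (toPath f).Homotopic ((toPath g).cast (h.endpts (by simp)) (h.endpts (by simp))) := h

theorem pRel.concat {α α' β β' : C(I, X)} (hα : pRel α α') (hβ : pRel β β') (h : β 1 = α 0)
    (h' : β' 1 = α' 0) : pRel (concat α β h) (concat α' β' h') :=
  hβ.homotopic.hcomp (hα.homotopic.pathCast h rfl)

theorem RelInessential.homotopic {U : Set X} (hU : RelInessential X U) {x y : X}
    {p q : Path x y} (hp : range p ⊆ U) (hq : range q ⊆ U) : p.Homotopic q := by
  have hloop : (p.trans q.symm).Homotopic (Path.refl x) := by
    have := hU (p.trans q.symm).toContinuousMap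
      (by simpa [Path.trans_range, Path.symm_range] using union_subset hp hq) (by simp)
    rwa [show (p.trans q.symm).toContinuousMap 0 = x from (p.trans q.symm).source] at this
  rw [← Path.Homotopic.Quotient.eq] at hloop ⊢
  calc Path.Homotopic.Quotient.mk p
      = (Path.Homotopic.Quotient.mk (p.trans q.symm)).trans (Path.Homotopic.Quotient.mk q) := by
        simp
    _ = Path.Homotopic.Quotient.mk q := by rw [hloop]; simp

theorem exists_rungs_subpath_homotopic {x y x' y' : X} {γ : Path x y} {δ : Path x' y'}
    {t : ℕ → I} {W O : ℕ → Set X} (n : ℕ)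
    (hW : ∀ k < n, RelInessential X (W k))
    (hγ : ∀ k < n, MapsTo γ (uIcc (t k) (t (k + 1))) (W k))
    (hδ : ∀ k < n, MapsTo δ (uIcc (t k) (t (k + 1))) (W k))
    (hOW : ∀ k < n, O k ⊆ W k ∧ O (k + 1) ⊆ W k)
    (hO : ∀ k ≤ n, ∃ p : Path (γ (t k)) (δ (t k)), range p ⊆ O k) :
    ∃ (b : Path (γ (t 0)) (δ (t 0))) (a : Path (γ (t n)) (δ (t n))),
      range b ⊆ O 0 ∧ range a ⊆ O n ∧
        (δ.subpath (t 0) (t n)).Homotopic ((b.symm.trans (γ.subpath (t 0) (t n))).trans a) := by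
  induction n with
  | zero =>
    obtain ⟨p, hp⟩ := hO 0 le_rfl
    refine ⟨p, p, hp, hp, ?_⟩
    rw [Path.subpath_self, Path.subpath_self, ← Path.Homotopic.Quotient.eq]
    simp
  | succ n ih =>
    obtain ⟨b, a, hb, ha, h⟩ := ih (fun k hk => hW k (by omega)) (fun k hk => hγ k (by omega))
      (fun k hk => hδ k (by omega)) (fun k hk => hOW k (by omega)) (fun k hk => hO k (by omega))
    obtain ⟨a', ha'⟩ := hO (n + 1) le_rfl
    have hstep : (δ.subpath (t n) (t (n + 1))).Homotopic
        ((a.symm.trans (γ.subpath (t n) (t (n + 1)))).trans a') := by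
      refine (hW n n.lt_succ_self).homotopic ?_ ?_
      · rw [Path.range_subpath]
        exact (hδ n n.lt_succ_self).image_subset
      · simp only [Path.trans_range, Path.symm_range, Path.range_subpath]
        exact union_subset (union_subset (ha.trans (hOW n n.lt_succ_self).1)
          (hγ n n.lt_succ_self).image_subset) (ha'.trans (hOW n n.lt_succ_self).2)
    have hsplit {z w : X} (ρ : Path z w) :
        Path.Homotopic.Quotient.mk (ρ.subpath (t 0) (t (n + 1))) =
          (Path.Homotopic.Quotient.mk (ρ.subpath (t 0) (t n))).trans
            (Path.Homotopic.Quotient.mk (ρ.subpath (t n) (t (n + 1)))) :=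
      (Path.Homotopic.Quotient.eq.mpr ⟨Path.Homotopy.subpathTransSubpath ρ _ _ _⟩).symm
    refine ⟨b, a', hb, ha', ?_⟩
    rw [← Path.Homotopic.Quotient.eq] at h hstep ⊢
    simp only [Path.Homotopic.Quotient.mk_trans, Path.Homotopic.Quotient.mk_symm] at h hstep ⊢
    rw [hsplit, hsplit, h, hstep]
    simp only [Path.Homotopic.Quotient.trans_assoc]
    rw [← Path.Homotopic.Quotient.trans_assoc (Path.Homotopic.Quotient.mk a),
      Path.Homotopic.Quotient.trans_symm, Path.Homotopic.Quotient.refl_trans]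

theorem SemilocSimplyConnected.exists_partition (hX : SemilocSimplyConnected X) (f : C(I, X)) :
    ∃ (t : ℕ → I) (n : ℕ) (W : ℕ → Set X), t 0 = 0 ∧ t n = 1 ∧ ∀ k, IsOpen (W k) ∧
      RelInessential X (W k) ∧ MapsTo f (uIcc (t k) (t (k + 1))) (W k) := by
  choose U hUo hUx hUi using hX
  obtain ⟨t, ht₀, ht, ⟨n, htn⟩, hcover⟩ := exists_monotone_Icc_subset_open_cover_unitInterval
    (fun s => (hUo (f s)).preimage f.continuous) fun s _ => mem_iUnion.mpr ⟨s, hUx (f s)⟩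
  choose i hi using hcover
  refine ⟨t, n, fun k => U (f (i k)), ht₀, htn n le_rfl, fun k => ⟨hUo _, hUi _, ?_⟩⟩
  rw [uIcc_of_le (ht k.le_succ)]
  exact hi k

theorem pq_mem_Nhd_of_subpath_homotopic {f g : C(I, X)} {u v : I} (hu : u = 0) (hv : v = 1)
    {A B : Set X} (b : Path (f u) (g u)) (a : Path (f v) (g v)) (hb : range b ⊆ B)
    (ha : range a ⊆ A) (h : ((toPath g).subpath u v).Homotopic
      ((b.symm.trans ((toPath f).subpath u v)).trans a)) :
    pq g ∈ Nhd (pq f) A B := by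
  subst hu hv
  rw [Path.subpath_zero_one, Path.subpath_zero_one] at h
  exact ⟨f, a, b.symm, b.symm.target, a.source.symm, rfl, ha, by simpa using hb,
    Quotient.sound h⟩

theorem eventually_pq_mem_Nhd [LocallyPathConnectedSpace X] (hX : SemilocSimplyConnected X)
    (f : C(I, X)) {A B : Set X} (hA : A ∈ 𝓝 (f 1)) (hB : B ∈ 𝓝 (f 0)) :
    ∀ᶠ g in 𝓝 f, pq g ∈ Nhd (pq f) A B := by
  obtain ⟨t, n, W, ht₀, htn, hW⟩ := hX.exists_partition f
  set D : ℕ → Set X := fun k => W k ∩ W (k - 1) ∩ (if k = 0 then B else univ) ∩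
    (if k = n then A else univ)
  have hD (k : ℕ) : D k ∈ 𝓝 (f (t k)) := by
    refine inter_mem (inter_mem (inter_mem ?_ ?_) ?_) ?_
    · exact (hW k).1.mem_nhds ((hW k).2.2 left_mem_uIcc)
    · rcases k with _ | k
      · exact (hW 0).1.mem_nhds ((hW 0).2.2 left_mem_uIcc)
      · exact (hW k).1.mem_nhds ((hW k).2.2 right_mem_uIcc)
    · split_ifs with hk
      · rwa [hk, ht₀]
      · exact univ_mem
    · split_ifs with hk
      · rwa [hk, htn]
      · exact univ_mem
  set O : ℕ → Set X := fun k => pathComponentIn (D k) (f (t k))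
  have hOD (k : ℕ) : O k ⊆ D k := pathComponentIn_subset
  filter_upwards [(eventually_all_finset (Finset.range n)).mpr fun k _ =>
      ContinuousMap.eventually_mapsTo isCompact_uIcc (hW k).1 (hW k).2.2,
    (eventually_all_finset (Finset.range (n + 1))).mpr fun k _ =>
      (continuous_eval_const (t k)).continuousAt.preimage_mem_nhds
        (pathComponentIn_mem_nhds (hD k))] with g hgW hgO
  obtain ⟨b, a, hb, ha, h⟩ := exists_rungs_subpath_homotopic (γ := toPath f) (δ := toPath g)
    (O := O) n (fun k _ => (hW k).2.1) (fun k _ => (hW k).2.2)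
    (fun k hk => hgW k (Finset.mem_range.mpr hk))
    (fun k _ => ⟨fun x hx => (hOD k hx).1.1.1, fun x hx => (hOD (k + 1) hx).1.1.2⟩)
    fun k hk => by
      obtain ⟨p, hp⟩ := (isPathConnected_pathComponentIn (mem_of_mem_nhds (hD k))).joinedIn _
        (mem_pathComponentIn_self (mem_of_mem_nhds (hD k))) _
        (hgO k (Finset.mem_range.mpr (Nat.lt_succ_of_le hk)))
      exact ⟨p, range_subset_iff.mpr hp⟩
  refine pq_mem_Nhd_of_subpath_homotopic ht₀ htn b a (fun x hx => ?_) (fun x hx => ?_) h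
  · simpa using (hOD 0 (hb hx)).1.2
  · simpa using (hOD n (ha hx)).2

theorem ContinuousMap.exists_pointwise_nhds_subset {Y : Type*} [TopologicalSpace Y]
    {f : C(Y, X)} {W : Set C(Y, X)} (hW : W ∈ 𝓝 f) :
    ∃ N : X → Set X, (∀ x, N x ∈ 𝓝 x) ∧ ∀ g : C(Y, X), (∀ y, g y ∈ N (f y)) → g ∈ W := by
  obtain ⟨S, hS, hSf, hSW⟩ := ContinuousMap.mem_nhds_iff.mp hW
  refine ⟨fun x => ⋂ KU ∈ {KU ∈ S | x ∈ KU.2}, KU.2, fun x => ?_, fun g hg => ?_⟩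
  · exact (biInter_mem (hS.subset (sep_subset _ _))).mpr fun KU hKU =>
      (hSf _ _ hKU.1).2.1.mem_nhds hKU.2
  · exact hSW fun K U hKU y hy => mem_iInter₂.mp (hg y) (K, U) ⟨hKU, (hSf K U hKU).2.2 hy⟩

/-- The time at which `concat δ (concat γ θ _) _` runs through `γ`, clamped to `I`. -/
def middleTime (t : I) : I := projIcc 0 1 zero_le_one (4 * (t : ℝ) - 1)

theorem middleTime_projIcc (v : ℝ) :
    middleTime (projIcc 0 1 zero_le_one v) = projIcc 0 1 zero_le_one (4 * v - 1) := by
  rw [middleTime]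
  rcases le_total v 0 with hv | hv
  · rw [projIcc_of_le_left _ hv, projIcc_of_le_left, projIcc_of_le_left] <;> push_cast <;> linarith
  rcases le_total v 1 with hv' | hv'
  · rw [projIcc_of_mem _ ⟨hv, hv'⟩]
  · rw [projIcc_of_right_le _ hv', projIcc_of_right_le, projIcc_of_right_le] <;> push_cast <;>
      linarith

theorem concat_concat_apply_mem {N : X → Set X} (hN : ∀ x, x ∈ N x) {γ δ θ : C(I, X)}
    (h₁ : θ 1 = γ 0) (h₂ : γ 1 = δ 0) (hδ : range δ ⊆ N (γ 1)) (hθ : range θ ⊆ N (γ 0))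
    (t : I) :
    concat δ (concat γ θ h₁) ((concat_one γ θ h₁).trans h₂) t ∈ N (γ (middleTime t)) := by
  rw [concat_apply, Path.trans_apply]
  split_ifs with h
  · rw [toPath_apply, concat_apply, Path.trans_apply]
    split_ifs with h'
    · rw [middleTime, projIcc_of_le_left _ (by push_cast at h' ⊢; linarith)]
      exact hθ (mem_range_self _)
    · convert hN (γ (middleTime t)) using 1
      change γ _ = γ _
      congr 1
      ext
      rw [middleTime, projIcc_of_mem _ ⟨by push_cast at h' ⊢; linarith, by linarith⟩]
      push_cast
      ring
  · rw [middleTime, projIcc_of_right_le _ (by linarith)]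
    exact hδ (mem_range_self _)

theorem projIcc_add_mul_min_add_max {c : ℝ} (hc : 0 ≤ c) (p : ℝ) :
    projIcc (0 : ℝ) 1 zero_le_one (p + c * (min p 0 + max (p - 1) 0)) =
      projIcc 0 1 zero_le_one p := by
  rcases le_total p 0 with hp | hp
  · rw [projIcc_of_le_left _ hp, projIcc_of_le_left]
    rw [min_eq_left hp, max_eq_right (by linarith)]
    nlinarith
  rcases le_total p 1 with hp' | hp'
  · rw [min_eq_right hp, max_eq_right (by linarith)]
    simp
  · rw [projIcc_of_right_le _ hp', projIcc_of_right_le]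
    rw [min_eq_right hp, max_eq_left (by linarith)]
    nlinarith

def stretch (ε : ℝ) (s : I) : I := projIcc 0 1 zero_le_one ((1 + 2 * ε) * s - ε)

theorem continuous_stretch : Continuous fun p : ℝ × I => stretch p.1 p.2 :=
  continuous_projIcc.comp (by fun_prop)

theorem stretch_zero (s : I) : stretch 0 s = s := by simp [stretch]

/-- A reparametrization `φ` with `middleTime ∘ φ = stretch ε`: the argument `p` of `stretch ε` is
made steeper outside `[0, 1]`, which the clamping ignores, so that `φ 0 = 0` and `φ 1 = 1`. -/
def stretchReparam (ε : ℝ) (s : I) : I :=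
  let p := (1 + 2 * ε) * (s : ℝ) - ε
  projIcc 0 1 zero_le_one ((1 + (p + 2 / ε * (min p 0 + max (p - 1) 0))) / 4)

theorem continuous_stretchReparam (ε : ℝ) : Continuous (stretchReparam ε) :=
  continuous_projIcc.comp (by fun_prop)

theorem middleTime_stretchReparam {ε : ℝ} (hε : 0 ≤ ε) (s : I) :
    middleTime (stretchReparam ε s) = stretch ε s := by
  rw [stretchReparam, middleTime_projIcc, stretch,
    ← projIcc_add_mul_min_add_max (by positivity : 0 ≤ 2 / ε) ((1 + 2 * ε) * s - ε)]
  congr 1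
  ring

theorem stretchReparam_apply_zero {ε : ℝ} (hε : 0 < ε) : stretchReparam ε 0 = 0 := by
  rw [stretchReparam, projIcc_of_le_left]
  · rfl
  push_cast
  rw [min_eq_left (by linarith), max_eq_right (by linarith)]
  field_simp
  nlinarith

theorem stretchReparam_apply_one {ε : ℝ} (hε : 0 < ε) : stretchReparam ε 1 = 1 := by
  rw [stretchReparam, projIcc_of_right_le]
  · rfl
  push_cast
  rw [min_eq_right (by linarith), max_eq_left (by linarith)]
  field_simp
  nlinarith

theorem exists_Nhd_subset_image {γ : C(I, X)} {W : Set C(I, X)} (hW : W ∈ 𝓝 γ) :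
    ∃ A ∈ 𝓝 (γ 1), ∃ B ∈ 𝓝 (γ 0), Nhd (pq γ) A B ⊆ pq '' W := by
  set Γ : C(ℝ, C(I, X)) := ContinuousMap.curry ⟨fun p => γ (stretch p.1 p.2),
    γ.continuous.comp continuous_stretch⟩
  have hΓ₀ : Γ 0 = γ := by ext s; simp [Γ, stretch_zero]
  have hΓW : ∀ᶠ ε in 𝓝[>] 0, Γ ε ∈ interior W :=
    ((Γ.continuous.tendsto 0).eventually (hΓ₀ ▸ interior_mem_nhds.mpr hW)).filter_mono
      nhdsWithin_le_nhds
  obtain ⟨ε, hΓε, hε⟩ := (hΓW.and self_mem_nhdsWithin).exists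
  obtain ⟨N, hN, hNW⟩ :=
    ContinuousMap.exists_pointwise_nhds_subset (isOpen_interior.mem_nhds hΓε)
  refine ⟨N (γ 1), hN _, N (γ 0), hN _, ?_⟩
  rintro _ ⟨γ', δ, θ, h₁, h₂, hγ', hδ, hθ, rfl⟩
  have hrel : pRel γ' γ := Quotient.exact hγ'
  have e₁ : θ 1 = γ 0 := h₁.trans (hrel.endpts (by simp))
  have e₂ : γ 1 = δ 0 := (hrel.endpts (by simp)).symm.trans h₂
  set P := concat δ (concat γ θ e₁) ((concat_one γ θ e₁).trans e₂)
  have hP : pq (concat δ (concat γ' θ h₁) ((concat_one γ' θ h₁).trans h₂)) = pq P :=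
    Quotient.sound (pRel.concat (ContinuousMap.HomotopicRel.refl δ)
      (hrel.concat (ContinuousMap.HomotopicRel.refl θ) _ _) _ _)
  set ω := (toPath P).reparam (stretchReparam ε) (continuous_stretchReparam ε)
    (stretchReparam_apply_zero hε) (stretchReparam_apply_one hε)
  refine ⟨ω.toContinuousMap, interior_subset (hNW _ fun s => ?_), ?_⟩
  · have := concat_concat_apply_mem (fun x => mem_of_mem_nhds (hN x)) e₁ e₂ hδ hθ
      (stretchReparam ε s)
    rwa [middleTime_stretchReparam hε.le] at this
  · rw [hP]
    exact Quotient.sound ⟨(Path.Homotopy.reparam _ _ _ _ _).symm⟩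

theorem isOpenMap_pq [LocallyPathConnectedSpace X] (hX : SemilocSimplyConnected X) :
    IsOpenMap (pq : C(I, X) → Pi1 X) := by
  intro W hW
  rw [← isQuotientMap_quotient_mk'.isOpen_preimage, isOpen_iff_mem_nhds]
  rintro δ ⟨γ, hγ, hγδ⟩
  obtain ⟨A, hA, B, hB, hsub⟩ := exists_Nhd_subset_image (hW.mem_nhds hγ)
  rw [show γ 1 = δ 1 from congrArg rngMap hγδ] at hA
  rw [show γ 0 = δ 0 from congrArg srcMap hγδ] at hB
  filter_upwards [eventually_pq_mem_Nhd hX δ hA hB] with g hg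
  exact hsub (hγδ ▸ hg)

theorem isEmbedding_pq_const : IsEmbedding fun x : X => pq (ContinuousMap.const I x) :=
  Function.LeftInverse.isEmbedding (f := srcMap) (fun _ => rfl)
    (continuous_quot_lift _ (continuous_eval_const 0))
    (continuous_quot_mk.comp ContinuousMap.continuous_const')

theorem ContinuousMap.isEmbedding_const {Y : Type*} [TopologicalSpace Y] [Nonempty Y] :
    IsEmbedding (ContinuousMap.const Y : X → C(Y, X)) :=
  Function.LeftInverse.isEmbedding (f := fun f => f (Classical.arbitrary Y)) (fun _ => rfl)
    (continuous_eval_const _) ContinuousMap.continuous_const'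

/-- For a locally path connected, semilocally simply connected `X`:
`X` is second countable iff `Π₁(X)` with the CO' topology is second countable, and these
are also equivalent to `P(X) = C(I, X)` with the compact-open topology being
second countable. -/
theorem stmt17 {X : Type*} [TopologicalSpace X] [LocallyPathConnectedSpace X]
    (hX : SemilocSimplyConnected X) :
    (SecondCountableTopology X ↔ SecondCountableTopology (Pi1 X)) ∧
      (SecondCountableTopology X ↔ SecondCountableTopology C(I, X)) := by
  have hP : SecondCountableTopology X → SecondCountableTopology C(I, X) := fun _ => inferInstance
  have hQ : SecondCountableTopology C(I, X) → SecondCountableTopology (Pi1 X) := fun _ =>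
    TopologicalSpace.Quotient.secondCountableTopology (isOpenMap_pq hX)
  exact ⟨⟨hQ ∘ hP, fun _ => isEmbedding_pq_const.isInducing.secondCountableTopology⟩,
    ⟨hP, fun _ => (ContinuousMap.isEmbedding_const (Y := I)).isInducing.secondCountableTopology⟩⟩
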